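/- Reduction of the energy harvesting multiple access channel with energy cooperation to a single-user problem: let g_1 = h_1/σ_2², g_2 = h_2/σ_1² > 0, α_1, α_2 ∈ [0,1], c_1 = max{g_1, α_1 g_2}, c_2 = max{g_2, α_2 g_1}. Then the supremum of the sum-throughput Σ_{i=1}^{N} (1/2)·log(1 + g_1 p_{1,i} + g_2 p_{2,i}) over all feasible policies equals the supremum of Σ_{i=1}^{N} (1/2)·log(1 + q_i) over all sequences q_i ≥ 0 satisfying the aggregate causality constraints Σ_{n=1}^{i} q_n ≤ Σ_{n=1}^{i} (c_1 E_{1,n} + c_2 E_{2,n}) for all i = 1,…,N. -/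

import Mathlib

/-!
Weight node `k`'s energy by `c_k = max(g_k, α_k g_j)`: the best received SNR a unit of it can
buy, either transmitted directly or shipped to the other node at efficiency `α_k`. Since
`α_k c_j ≤ c_k`, transferring energy never raises the total weighted energy, so the received SNR
`g₁ p₁ + g₂ p₂` of any feasible policy obeys the single-user causality constraint with
arrivals `c₁ E₁ + c₂ E₂`. Conversely, a single-user profile `q` meeting that constraint splits
greedily into `u + v` with `u` causal for the arrivals `c₁ E₁` and `v` for `c₂ E₂`, and each
node realises its share by spending its energy in whichever of the two ways achieves `c_k`.
As the throughput of a policy depends only on `q = g₁ p₁ + g₂ p₂`, the two sets whose suprema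
are compared are then equal.
-/

open Finset

lemma mul_max_le_max {a b x y : ℝ} (ha₀ : 0 ≤ a) (ha₁ : a ≤ 1) (hb : b ≤ 1) (hx : 0 ≤ x) :
    a * max y (b * x) ≤ max x (a * y) := by
  rw [mul_max_of_nonneg _ _ ha₀]
  refine max_le (le_max_right _ _) (le_max_of_le_left ?_)
  rw [← mul_assoc]
  exact mul_le_of_le_one_left hx ((mul_le_of_le_one_right ha₀ hb).trans ha₁)

lemma mul_add_mul_le_of_energy_balance {g₁ g₂ a₁ a₂ P₁ P₂ D₁ D₂ A B : ℝ}
    (hg₁ : 0 ≤ g₁) (hg₂ : 0 ≤ g₂) (ha₁ : a₁ ∈ Set.Icc (0 : ℝ) 1) (ha₂ : a₂ ∈ Set.Icc (0 : ℝ) 1)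
    (hP₁ : 0 ≤ P₁) (hP₂ : 0 ≤ P₂) (hD₁ : 0 ≤ D₁) (hD₂ : 0 ≤ D₂)
    (h₁ : P₁ + D₁ ≤ A + a₂ * D₂) (h₂ : P₂ + D₂ ≤ B + a₁ * D₁) :
    g₁ * P₁ + g₂ * P₂ ≤ max g₁ (a₁ * g₂) * A + max g₂ (a₂ * g₁) * B := by
  set c₁ := max g₁ (a₁ * g₂)
  set c₂ := max g₂ (a₂ * g₁)
  have hc₁ : g₁ ≤ c₁ := le_max_left _ _
  have hc₂ : g₂ ≤ c₂ := le_max_left _ _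
  have h₁₂ : a₁ * c₂ ≤ c₁ := mul_max_le_max ha₁.1 ha₁.2 ha₂.2 hg₁
  have h₂₁ : a₂ * c₁ ≤ c₂ := mul_max_le_max ha₂.1 ha₂.2 ha₁.2 hg₂
  calc g₁ * P₁ + g₂ * P₂ ≤ c₁ * P₁ + c₂ * P₂ := by gcongr
    _ ≤ c₁ * (A + a₂ * D₂ - D₁) + c₂ * (B + a₁ * D₁ - D₂) := by
        gcongr <;> linarith
    _ = c₁ * A + c₂ * B - (c₁ - a₁ * c₂) * D₁ - (c₂ - a₂ * c₁) * D₂ := by ring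
    _ ≤ c₁ * A + c₂ * B := by
        nlinarith [mul_nonneg (sub_nonneg.2 h₁₂) hD₁, mul_nonneg (sub_nonneg.2 h₂₁) hD₂]

section Policy

variable {N : ℕ} {E₁ E₂ p₁ p₂ d₁ d₂ : ℕ → ℝ} {g₁ g₂ a₁ a₂ : ℝ}

lemma sum_received_le_of_feasible
    (hg₁ : 0 ≤ g₁) (hg₂ : 0 ≤ g₂) (ha₁ : a₁ ∈ Set.Icc (0 : ℝ) 1) (ha₂ : a₂ ∈ Set.Icc (0 : ℝ) 1)
    (hnn : ∀ i < N, 0 ≤ p₁ i ∧ 0 ≤ p₂ i ∧ 0 ≤ d₁ i ∧ 0 ≤ d₂ i)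
    {i : ℕ} (hi : i < N)
    (h₁ : 0 ≤ ∑ n ∈ range (i + 1), (E₁ n - p₁ n + a₂ * d₂ n - d₁ n))
    (h₂ : 0 ≤ ∑ n ∈ range (i + 1), (E₂ n - p₂ n + a₁ * d₁ n - d₂ n)) :
    ∑ n ∈ range (i + 1), (g₁ * p₁ n + g₂ * p₂ n)
      ≤ ∑ n ∈ range (i + 1), (max g₁ (a₁ * g₂) * E₁ n + max g₂ (a₂ * g₁) * E₂ n) := by
  have hlt : ∀ n ∈ range (i + 1), n < N := fun n hn => (mem_range.1 hn).trans_le hi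
  simp only [sum_add_distrib, sum_sub_distrib, ← mul_sum] at h₁ h₂ ⊢
  exact mul_add_mul_le_of_energy_balance hg₁ hg₂ ha₁ ha₂
    (sum_nonneg fun n hn => (hnn n (hlt n hn)).1)
    (sum_nonneg fun n hn => (hnn n (hlt n hn)).2.1)
    (sum_nonneg fun n hn => (hnn n (hlt n hn)).2.2.1)
    (sum_nonneg fun n hn => (hnn n (hlt n hn)).2.2.2) (by linarith) (by linarith)

lemma exists_mul_add_one_sub_mul_eq_max (x y : ℝ) :
    ∃ s ∈ Set.Icc (0 : ℝ) 1, s * x + (1 - s) * y = max x y := by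
  rcases le_total x y with h | h
  · exact ⟨0, by simp, by simp [max_eq_right h]⟩
  · exact ⟨1, by simp, by simp [max_eq_left h]⟩

/-- Node 1 spends `r₁ = u / c₁` in total, a fraction `s₁` of it as its own transmit power and the
rest as a transfer, which node 2 transmits after the loss `a₁`; symmetrically for node 2. -/
lemma exists_feasible_policy_of_causal
    {u v : ℕ → ℝ} (hg₁ : 0 < g₁) (hg₂ : 0 < g₂)
    (ha₁ : a₁ ∈ Set.Icc (0 : ℝ) 1) (ha₂ : a₂ ∈ Set.Icc (0 : ℝ) 1)
    (hu : ∀ n < N, 0 ≤ u n) (hv : ∀ n < N, 0 ≤ v n)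
    (hU : ∀ i < N, ∑ n ∈ range (i + 1), u n ≤ ∑ n ∈ range (i + 1), max g₁ (a₁ * g₂) * E₁ n)
    (hV : ∀ i < N, ∑ n ∈ range (i + 1), v n ≤ ∑ n ∈ range (i + 1), max g₂ (a₂ * g₁) * E₂ n) :
    ∃ p₁ p₂ d₁ d₂ : ℕ → ℝ,
      (∀ i < N, 0 ≤ p₁ i ∧ 0 ≤ p₂ i ∧ 0 ≤ d₁ i ∧ 0 ≤ d₂ i) ∧
      (∀ i < N,
        0 ≤ ∑ n ∈ range (i + 1), (E₁ n - p₁ n + a₂ * d₂ n - d₁ n) ∧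
        0 ≤ ∑ n ∈ range (i + 1), (E₂ n - p₂ n + a₁ * d₁ n - d₂ n)) ∧
      ∀ n, g₁ * p₁ n + g₂ * p₂ n = u n + v n := by
  set c₁ := max g₁ (a₁ * g₂)
  set c₂ := max g₂ (a₂ * g₁)
  have hc₁ : 0 < c₁ := hg₁.trans_le (le_max_left _ _)
  have hc₂ : 0 < c₂ := hg₂.trans_le (le_max_left _ _)
  obtain ⟨s₁, hs₁, hs₁c⟩ := exists_mul_add_one_sub_mul_eq_max g₁ (a₁ * g₂)
  obtain ⟨s₂, hs₂, hs₂c⟩ := exists_mul_add_one_sub_mul_eq_max g₂ (a₂ * g₁)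
  have hr₁ : ∀ n < N, 0 ≤ u n / c₁ := fun n hn => div_nonneg (hu n hn) hc₁.le
  have hr₂ : ∀ n < N, 0 ≤ v n / c₂ := fun n hn => div_nonneg (hv n hn) hc₂.le
  have hd₁ : ∀ n < N, 0 ≤ (1 - s₁) * (u n / c₁) :=
    fun n hn => mul_nonneg (sub_nonneg.2 hs₁.2) (hr₁ n hn)
  have hd₂ : ∀ n < N, 0 ≤ (1 - s₂) * (v n / c₂) :=
    fun n hn => mul_nonneg (sub_nonneg.2 hs₂.2) (hr₂ n hn)
  have hbudget : ∀ {c : ℝ} {w E : ℕ → ℝ}, 0 < c → ∀ i,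
      ∑ n ∈ range (i + 1), w n ≤ ∑ n ∈ range (i + 1), c * E n →
      0 ≤ ∑ n ∈ range (i + 1), (E n - w n / c) := by
    intro c w E hc i h
    rw [sum_sub_distrib, ← sum_div, sub_nonneg, div_le_iff₀ hc, sum_mul]
    simpa only [mul_comm] using h
  refine ⟨fun n => s₁ * (u n / c₁) + a₂ * ((1 - s₂) * (v n / c₂)),
    fun n => s₂ * (v n / c₂) + a₁ * ((1 - s₁) * (u n / c₁)),
    fun n => (1 - s₁) * (u n / c₁), fun n => (1 - s₂) * (v n / c₂),
    fun i hi => ⟨?_, ?_, hd₁ i hi, hd₂ i hi⟩, fun i hi => ⟨?_, ?_⟩, fun n => ?_⟩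
  · exact add_nonneg (mul_nonneg hs₁.1 (hr₁ i hi)) (mul_nonneg ha₂.1 (hd₂ i hi))
  · exact add_nonneg (mul_nonneg hs₂.1 (hr₂ i hi)) (mul_nonneg ha₁.1 (hd₁ i hi))
  · convert hbudget hc₁ i (hU i hi) using 2; ring
  · convert hbudget hc₂ i (hV i hi) using 2; ring
  · field_simp
    linear_combination u n * c₂ * hs₁c + v n * c₁ * hs₂c

end Policy

section Split

variable (q a : ℕ → ℝ)

/-- The cumulative share of `q` that a greedy allocation assigns to the budget with arrivals `a`;
the rest of `q` goes to the other budget. -/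
noncomputable def cappedPartialSum : ℕ → ℝ
  | 0 => 0
  | n + 1 => min (cappedPartialSum n + q n) (∑ m ∈ range (n + 1), a m)

lemma cappedPartialSum_succ (n : ℕ) :
    cappedPartialSum q a (n + 1) = min (cappedPartialSum q a n + q n) (∑ m ∈ range (n + 1), a m) :=
  rfl

lemma cappedPartialSum_le_sum (n : ℕ) : cappedPartialSum q a n ≤ ∑ m ∈ range n, a m := by
  cases n with
  | zero => simp [cappedPartialSum]
  | succ n => exact min_le_right _ _

lemma cappedPartialSum_succ_le (n : ℕ) :
    cappedPartialSum q a (n + 1) ≤ cappedPartialSum q a n + q n :=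
  min_le_left _ _

variable {q a}

lemma cappedPartialSum_le_succ {n : ℕ} (hq : 0 ≤ q n) (ha : 0 ≤ a n) :
    cappedPartialSum q a n ≤ cappedPartialSum q a (n + 1) := by
  refine le_min (by linarith) ?_
  rw [sum_range_succ]
  linarith [cappedPartialSum_le_sum q a n]

lemma sum_sub_cappedPartialSum_le {N : ℕ} {b : ℕ → ℝ} (hb : ∀ n < N, 0 ≤ b n)
    (h : ∀ i < N, ∑ n ∈ range (i + 1), q n ≤ ∑ n ∈ range (i + 1), (a n + b n)) :
    ∀ i ≤ N, ∑ n ∈ range i, q n - cappedPartialSum q a i ≤ ∑ n ∈ range i, b n := by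
  intro i hi
  induction i with
  | zero => simp [cappedPartialSum]
  | succ i ih =>
    have hiN : i < N := hi
    rcases min_cases (cappedPartialSum q a i + q i) (∑ m ∈ range (i + 1), a m) with
      ⟨heq, -⟩ | ⟨heq, -⟩
    · rw [cappedPartialSum_succ, heq, sum_range_succ, sum_range_succ]
      linarith [ih hiN.le, hb i hiN]
    · rw [cappedPartialSum_succ, heq]
      linarith [h i hiN, sum_add_distrib (s := range (i + 1)) (f := a) (g := b)]

lemma exists_causal_split {N : ℕ} {b : ℕ → ℝ} (hq : ∀ n < N, 0 ≤ q n) (ha : ∀ n < N, 0 ≤ a n)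
    (hb : ∀ n < N, 0 ≤ b n)
    (h : ∀ i < N, ∑ n ∈ range (i + 1), q n ≤ ∑ n ∈ range (i + 1), (a n + b n)) :
    ∃ u v : ℕ → ℝ, (∀ n < N, 0 ≤ u n ∧ 0 ≤ v n) ∧ (∀ n, q n = u n + v n) ∧
      ∀ i < N, ∑ n ∈ range (i + 1), u n ≤ ∑ n ∈ range (i + 1), a n ∧
        ∑ n ∈ range (i + 1), v n ≤ ∑ n ∈ range (i + 1), b n := by
  set C := cappedPartialSum q a
  have hsum : ∀ i, ∑ n ∈ range i, (C (n + 1) - C n) = C i := by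
    intro i
    rw [sum_range_sub]
    exact sub_zero _
  refine ⟨fun n => C (n + 1) - C n, fun n => q n - (C (n + 1) - C n),
    fun n hn => ⟨?_, ?_⟩, fun n => by ring, fun i hi => ⟨?_, ?_⟩⟩
  · linarith [cappedPartialSum_le_succ (hq n hn) (ha n hn)]
  · linarith [cappedPartialSum_succ_le q a n]
  · rw [hsum]
    exact cappedPartialSum_le_sum q a (i + 1)
  · rw [sum_sub_distrib, hsum]
    exact sum_sub_cappedPartialSum_le hb h (i + 1) hi

end Split

theorem stmt_12
    (N : ℕ) (E1 E2 : ℕ → ℝ) (g1 g2 a1 a2 : ℝ)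
    (hg1 : 0 < g1) (hg2 : 0 < g2)
    (ha1 : a1 ∈ Set.Icc (0:ℝ) 1) (ha2 : a2 ∈ Set.Icc (0:ℝ) 1)
    (hE : ∀ i < N, 0 ≤ E1 i ∧ 0 ≤ E2 i) :
    sSup {t : ℝ | ∃ p1 p2 d1 d2 : ℕ → ℝ,
        (∀ i < N, 0 ≤ p1 i ∧ 0 ≤ p2 i ∧ 0 ≤ d1 i ∧ 0 ≤ d2 i) ∧
        (∀ i < N,
          0 ≤ ∑ n ∈ Finset.range (i+1), (E1 n - p1 n + a2 * d2 n - d1 n) ∧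
          0 ≤ ∑ n ∈ Finset.range (i+1), (E2 n - p2 n + a1 * d1 n - d2 n)) ∧
        t = ∑ i ∈ Finset.range N, 1/2 * Real.log (1 + g1 * p1 i + g2 * p2 i)}
    = sSup {t : ℝ | ∃ q : ℕ → ℝ,
        (∀ i < N, 0 ≤ q i) ∧
        (∀ i < N,
          ∑ n ∈ Finset.range (i+1), q n
            ≤ ∑ n ∈ Finset.range (i+1),
                (max g1 (a1 * g2) * E1 n + max g2 (a2 * g1) * E2 n)) ∧
        t = ∑ i ∈ Finset.range N, 1/2 * Real.log (1 + q i)} := by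
  have hc1 : 0 ≤ max g1 (a1 * g2) := hg1.le.trans (le_max_left _ _)
  have hc2 : 0 ≤ max g2 (a2 * g1) := hg2.le.trans (le_max_left _ _)
  congr 1
  ext t
  constructor
  · rintro ⟨p1, p2, d1, d2, hnn, hfeas, rfl⟩
    refine ⟨fun n => g1 * p1 n + g2 * p2 n, fun i hi => ?_,
      fun i hi => sum_received_le_of_feasible hg1.le hg2.le ha1 ha2 hnn hi (hfeas i hi).1
        (hfeas i hi).2, by simp only [add_assoc]⟩
    exact add_nonneg (mul_nonneg hg1.le (hnn i hi).1) (mul_nonneg hg2.le (hnn i hi).2.1)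
  · rintro ⟨q, hq, hcausal, rfl⟩
    obtain ⟨u, v, huv, hq_eq, hsplit⟩ := exists_causal_split hq
      (fun n hn => mul_nonneg hc1 (hE n hn).1) (fun n hn => mul_nonneg hc2 (hE n hn).2) hcausal
    obtain ⟨p1, p2, d1, d2, hnn, hfeas, hrecv⟩ := exists_feasible_policy_of_causal hg1 hg2 ha1 ha2
      (fun n hn => (huv n hn).1) (fun n hn => (huv n hn).2)
      (fun i hi => (hsplit i hi).1) (fun i hi => (hsplit i hi).2)
    refine ⟨p1, p2, d1, d2, hnn, hfeas, sum_congr rfl fun n _ => ?_⟩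
    rw [add_assoc, hrecv, hq_eq]
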